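/- The point K₅ = (ε, 0, 0) (the mixed altruistic-punisher/exiter state, with w = 1 − ε) is an equilibrium of F, and charpoly(J(K₅)) = X · (X − ε(b − β − 1)) · (X − ε(1 − ε)); in particular, if 0 < ε < 1 then J(K₅) has the positive real eigenvalue ε(1 − ε), and if ε < 0 and b < 1 + β then J(K₅) has the positive real eigenvalue ε(b − β − 1), so in both cases K₅ is linearly unstable. -/
import Mathlib


noncomputable section

open Polynomial

/-- Payoff of altruistic punishers. -/
def PiAP (γ x y z : ℝ) : ℝ := x + y - γ * z

/-- Payoff of non-punishing cooperators. -/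
def PiNC (x y : ℝ) : ℝ := x + y

/-- Payoff of defectors. -/
def PiD (b β x y : ℝ) : ℝ := (b - β) * x + b * y

/-- First component of the reduced replicator vector field. -/
def fRep (b β γ ε x y z : ℝ) : ℝ :=
  x * ((1 - x) * (PiAP γ x y z - ε) - y * (PiNC x y - ε) - z * (PiD b β x y - ε))

/-- Second component of the reduced replicator vector field. -/
def gRep (b β γ ε x y z : ℝ) : ℝ :=
  y * ((1 - y) * (PiNC x y - ε) - x * (PiAP γ x y z - ε) - z * (PiD b β x y - ε))

/-- Third component of the reduced replicator vector field. -/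
def hRep (b β γ ε x y z : ℝ) : ℝ :=
  z * ((1 - z) * (PiD b β x y - ε) - y * (PiNC x y - ε) - x * (PiAP γ x y z - ε))

/-- The reduced replicator vector field `F : ℝ³ → ℝ³`. -/
def Fv (b β γ ε : ℝ) (p : ℝ × ℝ × ℝ) : ℝ × ℝ × ℝ :=
  (fRep b β γ ε p.1 p.2.1 p.2.2,
   gRep b β γ ε p.1 p.2.1 p.2.2,
   hRep b β γ ε p.1 p.2.1 p.2.2)

/-- Partial derivative in the first variable. -/
def pd1 (F : ℝ → ℝ → ℝ → ℝ) (p : ℝ × ℝ × ℝ) : ℝ :=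
  deriv (fun x => F x p.2.1 p.2.2) p.1

/-- Partial derivative in the second variable. -/
def pd2 (F : ℝ → ℝ → ℝ → ℝ) (p : ℝ × ℝ × ℝ) : ℝ :=
  deriv (fun y => F p.1 y p.2.2) p.2.1

/-- Partial derivative in the third variable. -/
def pd3 (F : ℝ → ℝ → ℝ → ℝ) (p : ℝ × ℝ × ℝ) : ℝ :=
  deriv (fun z => F p.1 p.2.1 z) p.2.2

/-- The Jacobian matrix of the reduced replicator vector field at `p`. -/
def Jac (b β γ ε : ℝ) (p : ℝ × ℝ × ℝ) : Matrix (Fin 3) (Fin 3) ℝ :=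
  !![pd1 (fRep b β γ ε) p, pd2 (fRep b β γ ε) p, pd3 (fRep b β γ ε) p;
     pd1 (gRep b β γ ε) p, pd2 (gRep b β γ ε) p, pd3 (gRep b β γ ε) p;
     pd1 (hRep b β γ ε) p, pd2 (hRep b β γ ε) p, pd3 (hRep b β γ ε) p]

lemma deriv_cubic (a3 a2 a1 a0 t : ℝ) :
    deriv (fun x : ℝ => a3 * x ^ 3 + a2 * x ^ 2 + a1 * x + a0) t
      = 3 * a3 * t ^ 2 + 2 * a2 * t + a1 := by
  have h : HasDerivAt (fun x : ℝ => a3 * x ^ 3 + a2 * x ^ 2 + a1 * x + a0)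
      (a3 * (↑3 * t ^ (3 - 1)) + a2 * (↑2 * t ^ (2 - 1)) + a1 * 1 + 0) t :=
    ((((hasDerivAt_pow 3 t).const_mul a3).add
        ((hasDerivAt_pow 2 t).const_mul a2)).add
        ((hasDerivAt_id t).const_mul a1)).add (hasDerivAt_const t a0)
  rw [h.deriv]; norm_num; ring

/-- the mixed altruistic-punisher/exiter state `K₅ = (ε,0,0)`. -/
theorem K5_equilibrium_charpoly_unstable (b β γ ε : ℝ)
    (hb : 1 < b) (hβ : 0 < β) (hγ : 0 < γ) (hε : ε < 1) :
    Fv b β γ ε (ε, 0, 0) = (0, 0, 0) ∧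
    (Jac b β γ ε (ε, 0, 0)).charpoly =
      X * (X - C (ε * (b - β - 1))) * (X - C (ε * (1 - ε))) ∧
    (0 < ε →
      0 < ε * (1 - ε) ∧ ((Jac b β γ ε (ε, 0, 0)).charpoly).IsRoot (ε * (1 - ε))) ∧
    (ε < 0 → b < 1 + β →
      0 < ε * (b - β - 1) ∧
      ((Jac b β γ ε (ε, 0, 0)).charpoly).IsRoot (ε * (b - β - 1))) := by
  have cubic : ∀ (F : ℝ → ℝ) (a3 a2 a1 a0 t : ℝ),
      (F = fun x : ℝ => a3 * x ^ 3 + a2 * x ^ 2 + a1 * x + a0) →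
      deriv F t = 3 * a3 * t ^ 2 + 2 * a2 * t + a1 := by
    intro F a3 a2 a1 a0 t hF; rw [hF, deriv_cubic]
  have hf1 : pd1 (fRep b β γ ε) (ε, 0, 0) = ε * (1 - ε) := by
    show deriv (fun x => fRep b β γ ε x 0 0) ε = _
    rw [cubic _ (-1) (1 + ε) (-ε) 0 ε (by
      funext x; simp [fRep, PiAP, PiNC, PiD]; ring)]
    ring
  have hf2 : pd2 (fRep b β γ ε) (ε, 0, 0) = ε * (1 - ε) := by
    show deriv (fun y => fRep b β γ ε ε y 0) 0 = _
    rw [cubic _ 0 (-ε) (ε * (1 - ε)) 0 0 (by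
      funext y; simp [fRep, PiAP, PiNC, PiD]; ring)]
    ring
  set A : ℝ := ε * (-(1 - ε) * γ - (ε * (b - β) - ε)) with hA
  have hf3 : pd3 (fRep b β γ ε) (ε, 0, 0) = A := by
    show deriv (fun z => fRep b β γ ε ε 0 z) 0 = _
    rw [cubic _ 0 0 A 0 0 (by
      funext z; simp [fRep, PiAP, PiNC, PiD, hA]; ring)]
    ring
  have hg1 : pd1 (gRep b β γ ε) (ε, 0, 0) = 0 := by
    show deriv (fun x => gRep b β γ ε x 0 0) ε = _
    rw [cubic _ 0 0 0 0 ε (by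
      funext x; simp [gRep, PiAP, PiNC, PiD])]
    ring
  have hg2 : pd2 (gRep b β γ ε) (ε, 0, 0) = 0 := by
    show deriv (fun y => gRep b β γ ε ε y 0) 0 = _
    rw [cubic _ (-1) (1 - ε) 0 0 0 (by
      funext y; simp [gRep, PiAP, PiNC, PiD]; ring)]
    ring
  have hg3 : pd3 (gRep b β γ ε) (ε, 0, 0) = 0 := by
    show deriv (fun z => gRep b β γ ε ε 0 z) 0 = _
    rw [cubic _ 0 0 0 0 0 (by
      funext z; simp [gRep, PiAP, PiNC, PiD])]
    ring
  have hh1 : pd1 (hRep b β γ ε) (ε, 0, 0) = 0 := by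
    show deriv (fun x => hRep b β γ ε x 0 0) ε = _
    rw [cubic _ 0 0 0 0 ε (by
      funext x; simp [hRep, PiAP, PiNC, PiD])]
    ring
  have hh2 : pd2 (hRep b β γ ε) (ε, 0, 0) = 0 := by
    show deriv (fun y => hRep b β γ ε ε y 0) 0 = _
    rw [cubic _ 0 0 0 0 0 (by
      funext y; simp [hRep, PiAP, PiNC, PiD])]
    ring
  have hh3 : pd3 (hRep b β γ ε) (ε, 0, 0) = ε * (b - β - 1) := by
    show deriv (fun z => hRep b β γ ε ε 0 z) 0 = _
    rw [cubic _ 0 (ε * γ - (ε * (b - β) - ε)) (ε * (b - β) - ε) 0 0 (by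
      funext z; simp [hRep, PiAP, PiNC, PiD]; ring)]
    ring
  have hJ : Jac b β γ ε (ε, 0, 0) =
      !![ε * (1 - ε), ε * (1 - ε), A; 0, 0, 0; 0, 0, ε * (b - β - 1)] := by
    rw [Jac, hf1, hf2, hf3, hg1, hg2, hg3, hh1, hh2, hh3]
  have hcp : (Jac b β γ ε (ε, 0, 0)).charpoly =
      X * (X - C (ε * (b - β - 1))) * (X - C (ε * (1 - ε))) := by
    rw [hJ, Matrix.charpoly, Matrix.det_fin_three]
    simp [Matrix.charmatrix_apply, Matrix.one_apply, Matrix.vecHead, Matrix.vecTail]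
    ring
  refine ⟨?_, hcp, ?_, ?_⟩
  · simp [Fv, fRep, gRep, hRep, PiAP, PiNC, PiD]
  · intro hε0
    have hpos : 0 < ε * (1 - ε) := mul_pos hε0 (by linarith)
    refine ⟨hpos, ?_⟩
    rw [hcp]; simp [Polynomial.IsRoot]
  · intro hε0 hbβ
    have hpos : 0 < ε * (b - β - 1) := mul_pos_of_neg_of_neg hε0 (by linarith)
    refine ⟨hpos, ?_⟩
    rw [hcp]; simp [Polynomial.IsRoot]
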